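/- Let N ≥ 1, let u : ℝ^N → ℂ be continuously differentiable, let t ≥ 0, set s = t/(1+t), and define v : ℝ^N → ℂ by v(y) = (1+t)^{N/2} u((1+t)y) e^{-i(1+t)|y|²/4}. Then ∫_{ℝ^N} |∇u(x)|² dx = (1/4) ∫_{ℝ^N} |y v(y) − 2i(1−s) ∇v(y)|² dy, where both sides are Lebesgue integrals of nonnegative functions (possibly +∞); here y v(y) − 2i(1−s)∇v(y) denotes the ℂ^N-valued function whose k-th component is y_k v(y) − 2i(1−s) ∂_k v(y). -/

import Mathlib

/-!
Write `a = 1 + t` and `c = a ^ (N/2)`, so that `v y = c u(a y) e^{-ia|y|²/4}`. Differentiating the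
chirp `e^{-ia|y|²/4}` produces `-(i a y / 2) v`, and because `(1 - s) a = 1` this term cancels
`y v` exactly: `y v - 2i(1-s)∇v = -2i c e^{-ia|y|²/4} ∇u(a y)`. Its squared modulus is
`4 a^N |∇u(a y)|²`, and the dilation `y ↦ a y` contributes the Jacobian `a^{-N}`.
-/

open MeasureTheory Complex

section Dilation

variable {E : Type*} [NormedAddCommGroup E] [NormedSpace ℝ E] [MeasurableSpace E] [BorelSpace E]
  [FiniteDimensional ℝ E] (μ : Measure E) [μ.IsAddHaarMeasure]

theorem lintegral_comp_smul (f : E → ENNReal) {r : ℝ} (hr : r ≠ 0) :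
    ∫⁻ x, f (r • x) ∂μ = ENNReal.ofReal |(r ^ Module.finrank ℝ E)⁻¹| * ∫⁻ x, f x ∂μ := by
  let e := (Homeomorph.smul (α := E) (isUnit_iff_ne_zero.2 hr).unit).toMeasurableEquiv
  calc ∫⁻ x, f (r • x) ∂μ = ∫⁻ x, f x ∂(Measure.map (r • ·) μ) :=
        (lintegral_map_equiv f e).symm
    _ = _ := by rw [Measure.map_addHaar_smul μ hr, lintegral_smul_measure, smul_eq_mul]

end Dilation

section Pseudoconformal

noncomputable def chirp {E : Type*} [Norm E] (a : ℝ) (y : E) : ℂ :=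
  cexp (-(I * a * (‖y‖ : ℂ) ^ 2 / 4))

theorem norm_chirp {E : Type*} [Norm E] (a : ℝ) (y : E) : ‖chirp a y‖ = 1 := by
  have hphase : -(I * a * (‖y‖ : ℂ) ^ 2 / 4) = ((-(a * ‖y‖ ^ 2 / 4) : ℝ) : ℂ) * I := by
    push_cast; ring
  rw [chirp, hphase, norm_exp_ofReal_mul_I]

variable {E : Type*} [NormedAddCommGroup E] [InnerProductSpace ℝ E]

theorem hasFDerivAt_chirp (a : ℝ) (y : E) :
    HasFDerivAt (chirp a) ((-(I * a / 2) * chirp a y) • (ofRealCLM.comp (innerSL ℝ y))) y := by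
  have hq : HasFDerivAt (fun x : E => ((‖x‖ ^ 2 : ℝ) : ℂ)) (ofRealCLM.comp (2 • innerSL ℝ y)) y :=
    ofRealCLM.hasFDerivAt.comp y (hasStrictFDerivAt_norm_sq y).hasFDerivAt
  have := (hq.const_mul (-(I * a / 4))).cexp
  convert this using 1
  · funext x; simp only [chirp]; push_cast; ring_nf
  · ext w
    simp only [chirp, neg_mul, smul_apply, ContinuousLinearMap.comp_apply, coe_innerSL_apply,
      ofRealCLM_apply, smul_eq_mul, ofReal_pow, ContinuousLinearMap.comp_smul, nsmul_eq_mul,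
      Nat.cast_ofNat, mul_neg, neg_inj]
    ring_nf

noncomputable def pseudoconformalTransform (a c : ℝ) (u : E → ℂ) (y : E) : ℂ :=
  c * u (a • y) * chirp a y

variable {u : E → ℂ} {a b c : ℝ} {y : E}

theorem fderiv_pseudoconformalTransform_apply (hu : DifferentiableAt ℝ u (a • y)) (w : E) :
    fderiv ℝ (pseudoconformalTransform a c u) y w =
      c * chirp a y * (a * fderiv ℝ u (a • y) w - I * a * (inner ℝ y w : ℝ) / 2 * u (a • y)) := by
  have hdil : HasFDerivAt (fun x : E => c * u (a • x))
      ((c : ℂ) • (fderiv ℝ u (a • y)).comp (a • ContinuousLinearMap.id ℝ E)) y :=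
    (hu.hasFDerivAt.comp y ((hasFDerivAt_id y).const_smul a)).const_mul (c : ℂ)
  have hT : pseudoconformalTransform a c u = (fun x => c * u (a • x)) * chirp a := rfl
  rw [hT, (hdil.mul (hasFDerivAt_chirp a y)).fderiv]
  simp only [add_apply, smul_apply, ContinuousLinearMap.comp_apply, ContinuousLinearMap.id_apply,
    innerSL_apply_apply, ofRealCLM_apply, smul_eq_mul, real_smul, map_smul]
  ring

theorem inner_mul_sub_fderiv_pseudoconformalTransform (hu : DifferentiableAt ℝ u (a • y))
    (hab : b * a = 1) (w : E) :
    (inner ℝ y w : ℂ) * pseudoconformalTransform a c u y -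
        2 * I * b * fderiv ℝ (pseudoconformalTransform a c u) y w =
      -2 * I * c * chirp a y * fderiv ℝ u (a • y) w := by
  have hab' : (b : ℂ) * a = 1 := by exact_mod_cast hab
  rw [fderiv_pseudoconformalTransform_apply hu, pseudoconformalTransform]
  linear_combination (-2 * I * c * chirp a y * fderiv ℝ u (a • y) w
    + (inner ℝ y w : ℂ) * c * chirp a y * u (a • y) * I ^ 2) * hab'
    + (inner ℝ y w : ℂ) * c * chirp a y * u (a • y) * I_sq

theorem norm_inner_mul_sub_fderiv_pseudoconformalTransform (hu : DifferentiableAt ℝ u (a • y))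
    (hab : b * a = 1) (w : E) :
    ‖(inner ℝ y w : ℂ) * pseudoconformalTransform a c u y -
        2 * I * b * fderiv ℝ (pseudoconformalTransform a c u) y w‖ =
      2 * |c| * ‖fderiv ℝ u (a • y) w‖ := by
  rw [inner_mul_sub_fderiv_pseudoconformalTransform hu hab]
  simp [norm_chirp]

end Pseudoconformal

theorem sum_norm_sq_coord_mul_sub_fderiv_pseudoconformalTransform {ι : Type*} [Fintype ι]
    [DecidableEq ι] {u : EuclideanSpace ℝ ι → ℂ} {a b c : ℝ} {y : EuclideanSpace ℝ ι}
    (hu : DifferentiableAt ℝ u (a • y)) (hab : b * a = 1) :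
    ∑ k, ‖((y k : ℝ) : ℂ) * pseudoconformalTransform a c u y -
        2 * I * (b : ℂ) *
          fderiv ℝ (pseudoconformalTransform a c u) y (EuclideanSpace.single k 1)‖ ^ 2 =
      4 * c ^ 2 * ∑ k, ‖fderiv ℝ u (a • y) (EuclideanSpace.single k 1)‖ ^ 2 := by
  rw [Finset.mul_sum]
  refine Finset.sum_congr rfl fun k _ => ?_
  have hcoord : y k = inner ℝ y (EuclideanSpace.single k (1 : ℝ)) := by
    simp [EuclideanSpace.inner_single_right]
  rw [hcoord, norm_inner_mul_sub_fderiv_pseudoconformalTransform hu hab, mul_pow, mul_pow,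
    sq_abs]
  ring

theorem stmt4_general {N : ℕ} (u : EuclideanSpace ℝ (Fin N) → ℂ)
    (hu : ContDiff ℝ 1 u) (t : ℝ) (ht : 0 ≤ t)
    (s : ℝ) (hs : s = t / (1 + t))
    (v : EuclideanSpace ℝ (Fin N) → ℂ)
    (hv : ∀ y, v y = (((1 + t) ^ ((N:ℝ)/2) : ℝ) : ℂ) * u ((1 + t) • y) *
      Complex.exp (-(Complex.I * ((1 + t : ℝ) : ℂ) * (‖y‖:ℂ)^2 / 4))) :
    ∫⁻ x, ENNReal.ofReal (∑ k : Fin N,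
        ‖fderiv ℝ u x (EuclideanSpace.single k 1)‖ ^ 2) =
    ENNReal.ofReal (1/4) * ∫⁻ y, ENNReal.ofReal (∑ k : Fin N,
        ‖((y k : ℝ) : ℂ) * v y -
          2 * Complex.I * ((1 - s : ℝ) : ℂ) *
            fderiv ℝ v y (EuclideanSpace.single k 1)‖ ^ 2) := by
  set a := 1 + t
  have ha : 0 < a := by positivity
  have hv' : v = pseudoconformalTransform a (a ^ ((N : ℝ) / 2)) u := funext hv
  have hsa : (1 - s) * a = 1 := by rw [hs]; field_simp; ring
  have hc : (a ^ ((N : ℝ) / 2)) ^ 2 = a ^ N := by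
    rw [← Real.rpow_natCast, ← Real.rpow_mul ha.le]; norm_num
  have hdiff := hu.differentiable one_ne_zero
  simp_rw [hv', sum_norm_sq_coord_mul_sub_fderiv_pseudoconformalTransform (hdiff _) hsa, hc,
    ENNReal.ofReal_mul (by positivity : (0 : ℝ) ≤ 4 * a ^ N)]
  rw [lintegral_const_mul' _ _ ENNReal.ofReal_ne_top,
    lintegral_comp_smul volume
      (fun x => ENNReal.ofReal (∑ k, ‖fderiv ℝ u x (EuclideanSpace.single k 1)‖ ^ 2)) ha.ne',
    finrank_euclideanSpace_fin, ← mul_assoc, ← mul_assoc, ← ENNReal.ofReal_mul (by norm_num),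
    ← ENNReal.ofReal_mul (by positivity)]
  rw [abs_of_pos (by positivity), show 1 / 4 * (4 * a ^ N) * (a ^ N)⁻¹ = 1 by field_simp]
  simp

/-- `∫ |∇u|² = (1/4) ∫ |y v − 2i(1−s)∇v|²` for the spatial
pseudoconformal transform `v` of `u` at time `t`, with `s = t/(1+t)`. -/
theorem stmt4 {N : ℕ} (hN : 1 ≤ N) (u : EuclideanSpace ℝ (Fin N) → ℂ)
    (hu : ContDiff ℝ 1 u) (t : ℝ) (ht : 0 ≤ t)
    (s : ℝ) (hs : s = t / (1 + t))
    (v : EuclideanSpace ℝ (Fin N) → ℂ)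
    (hv : ∀ y, v y = (((1 + t) ^ ((N:ℝ)/2) : ℝ) : ℂ) * u ((1 + t) • y) *
      Complex.exp (-(Complex.I * ((1 + t : ℝ) : ℂ) * (‖y‖:ℂ)^2 / 4))) :
    ∫⁻ x, ENNReal.ofReal (∑ k : Fin N,
        ‖fderiv ℝ u x (EuclideanSpace.single k 1)‖ ^ 2) =
    ENNReal.ofReal (1/4) * ∫⁻ y, ENNReal.ofReal (∑ k : Fin N,
        ‖((y k : ℝ) : ℂ) * v y -
          2 * Complex.I * ((1 - s : ℝ) : ℂ) *
            fderiv ℝ v y (EuclideanSpace.single k 1)‖ ^ 2) :=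
  stmt4_general u hu t ht s hs v hv
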